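/- Interchangeability of □ and ◇ in NR: let χ be the translation replacing every □ by ◇ (i.e., χ(□A) = ¬□¬χ(A), commuting with propositional connectives and fixing atoms). Then for every modal formula A, NR ⊢ A if and only if NR ⊢ χ(A). -/
import Mathlib


/-- Modal formulas: propositional variables, ⊥, ∧, ∨, →, □.  Negation is defined. -/
inductive Formula : Type
  | var : ℕ → Formula
  | bot : Formula
  | and : Formula → Formula → Formula
  | or : Formula → Formula → Formula
  | imp : Formula → Formula → Formula
  | box : Formula → Formula
deriving DecidableEq

namespace Formula
/-- ¬A := A → ⊥ -/
def neg (A : Formula) : Formula := A.imp .bot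
end Formula

/-- `A` is a propositional tautology (in the modal language): it is true under every
assignment of truth values that respects the propositional connectives (variables and
boxed formulas are treated as atoms). -/
def IsTautology (A : Formula) : Prop :=
  ∀ v : Formula → Prop,
    (¬ v .bot) →
    (∀ B C, v (.and B C) ↔ (v B ∧ v C)) →
    (∀ B C, v (.or B C) ↔ (v B ∨ v C)) →
    (∀ B C, v (.imp B C) ↔ (v B → v C)) →
    v A

/-- Satisfaction in an N-model `(W, {≺_B}, ⊩)` with relations `R` and valuation `V`:
`x ⊩ □B` iff every `y` with `x ≺_B y` satisfies `B`. -/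
def Sat {W : Type} (R : Formula → W → W → Prop) (V : W → ℕ → Prop) :
    W → Formula → Prop
  | w, .var n => V w n
  | _, .bot => False
  | w, .and A B => Sat R V w A ∧ Sat R V w B
  | w, .or A B => Sat R V w A ∨ Sat R V w B
  | w, .imp A B => Sat R V w A → Sat R V w B
  | w, .box A => ∀ y, R A w y → Sat R V y A

/-- The set of subformulas Sub(A). -/
def subf : Formula → Finset Formula
  | .var n => {.var n}
  | .bot => {.bot}
  | .and A B => insert (.and A B) (subf A ∪ subf B)
  | .or A B => insert (.or A B) (subf A ∪ subf B)
  | .imp A B => insert (.imp A B) (subf A ∪ subf B)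
  | .box A => insert (.box A) (subf A)

/-- The logic NR. -/
inductive NRProv : Formula → Prop
  | taut {A} : IsTautology A → NRProv A
  | mp {A B} : NRProv (A.imp B) → NRProv A → NRProv B
  | nec {A} : NRProv A → NRProv A.box
  | ros {A : Formula} : NRProv A.neg → NRProv A.box.neg

/-- The translation χ replacing every □ by ◇ = ¬□¬ (it fixes atoms and commutes
with the propositional connectives; note χ(¬A) = ¬χ(A) since ¬A := A → ⊥). -/
def chi : Formula → Formula
  | .var n => .var n
  | .bot => .bot
  | .and A B => .and (chi A) (chi B)
  | .or A B => .or (chi A) (chi B)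
  | .imp A B => .imp (chi A) (chi B)
  | .box A => (((chi A).neg).box).neg

-- ======== auxiliary development ========
open Classical

lemma subf_self (A : Formula) : A ∈ subf A := by
  cases A <;> simp [subf]

lemma subf_trans : ∀ {A C : Formula}, C ∈ subf A → subf C ⊆ subf A := by
  intro A
  induction A with
  | var n => intro C hC; simp [subf] at hC; subst hC; simp [subf]
  | bot => intro C hC; simp [subf] at hC; subst hC; simp [subf]
  | and A B ihA ihB =>
      intro C hC; simp [subf] at hC
      rcases hC with rfl | h | h
      · exact subset_refl _
      · exact (ihA h).trans (by intro x hx; simp [subf]; tauto)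
      · exact (ihB h).trans (by intro x hx; simp [subf]; tauto)
  | or A B ihA ihB =>
      intro C hC; simp [subf] at hC
      rcases hC with rfl | h | h
      · exact subset_refl _
      · exact (ihA h).trans (by intro x hx; simp [subf]; tauto)
      · exact (ihB h).trans (by intro x hx; simp [subf]; tauto)
  | imp A B ihA ihB =>
      intro C hC; simp [subf] at hC
      rcases hC with rfl | h | h
      · exact subset_refl _
      · exact (ihA h).trans (by intro x hx; simp [subf]; tauto)
      · exact (ihB h).trans (by intro x hx; simp [subf]; tauto)
  | box A ihA =>
      intro C hC; simp [subf] at hC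
      rcases hC with rfl | h
      · exact subset_refl _
      · exact (ihA h).trans (by intro x hx; simp [subf]; tauto)

lemma mem_and_left {A B C : Formula} (h : Formula.and B C ∈ subf A) : B ∈ subf A :=
  subf_trans h (by simp [subf]; exact Or.inr (Or.inl (subf_self B)))
lemma mem_and_right {A B C : Formula} (h : Formula.and B C ∈ subf A) : C ∈ subf A :=
  subf_trans h (by simp [subf]; exact Or.inr (Or.inr (subf_self C)))
lemma mem_or_left {A B C : Formula} (h : Formula.or B C ∈ subf A) : B ∈ subf A :=
  subf_trans h (by simp [subf]; exact Or.inr (Or.inl (subf_self B)))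
lemma mem_or_right {A B C : Formula} (h : Formula.or B C ∈ subf A) : C ∈ subf A :=
  subf_trans h (by simp [subf]; exact Or.inr (Or.inr (subf_self C)))
lemma mem_imp_left {A B C : Formula} (h : Formula.imp B C ∈ subf A) : B ∈ subf A :=
  subf_trans h (by simp [subf]; exact Or.inr (Or.inl (subf_self B)))
lemma mem_imp_right {A B C : Formula} (h : Formula.imp B C ∈ subf A) : C ∈ subf A :=
  subf_trans h (by simp [subf]; exact Or.inr (Or.inr (subf_self C)))

def boxes : Formula → ℕ
  | .var _ => 0
  | .bot => 0
  | .and A B => boxes A + boxes B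
  | .or A B => boxes A + boxes B
  | .imp A B => boxes A + boxes B
  | .box A => boxes A + 1

lemma boxes_subf : ∀ {A C : Formula}, C ∈ subf A → boxes C ≤ boxes A := by
  intro A
  induction A with
  | var n => intro C hC; simp [subf] at hC; subst hC; simp [boxes]
  | bot => intro C hC; simp [subf] at hC; subst hC; simp [boxes]
  | and A B ihA ihB =>
      intro C hC; simp [subf] at hC
      rcases hC with rfl | h | h
      · exact le_refl _
      · exact le_trans (ihA h) (by simp only [boxes]; omega)
      · exact le_trans (ihB h) (by simp only [boxes]; omega)
  | or A B ihA ihB =>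
      intro C hC; simp [subf] at hC
      rcases hC with rfl | h | h
      · exact le_refl _
      · exact le_trans (ihA h) (by simp only [boxes]; omega)
      · exact le_trans (ihB h) (by simp only [boxes]; omega)
  | imp A B ihA ihB =>
      intro C hC; simp [subf] at hC
      rcases hC with rfl | h | h
      · exact le_refl _
      · exact le_trans (ihA h) (by simp only [boxes]; omega)
      · exact le_trans (ihB h) (by simp only [boxes]; omega)
  | box A ihA =>
      intro C hC; simp [subf] at hC
      rcases hC with rfl | h
      · exact le_refl _
      · exact le_trans (ihA h) (by simp only [boxes]; omega)

lemma chi_not_box (B X : Formula) : chi B ≠ Formula.box X := by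
  cases B <;> simp [chi, Formula.neg]

lemma chi_inj : ∀ (B B' : Formula), chi B = chi B' → B = B' := by
  intro B
  induction B with
  | var n =>
      intro B' h
      cases B' <;> simp only [chi, Formula.neg, Formula.var.injEq, reduceCtorEq] at h
      rw [h]
  | bot =>
      intro B' h
      cases B' <;> simp only [chi, Formula.neg, reduceCtorEq] at h
      rfl
  | and A B ihA ihB =>
      intro B' h
      cases B' <;> simp only [chi, Formula.neg, Formula.and.injEq, reduceCtorEq] at h
      rw [ihA _ h.1, ihB _ h.2]
  | or A B ihA ihB =>
      intro B' h
      cases B' <;> simp only [chi, Formula.neg, Formula.or.injEq, reduceCtorEq] at h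
      rw [ihA _ h.1, ihB _ h.2]
  | imp A B ihA ihB =>
      intro B' h
      cases B' <;> simp only [chi, Formula.neg, Formula.imp.injEq, reduceCtorEq] at h
      · rw [ihA _ h.1, ihB _ h.2]
      · exact absurd h.1 (chi_not_box A _)
  | box A ihA =>
      intro B' h
      cases B' <;> simp only [chi, Formula.neg, Formula.imp.injEq, Formula.box.injEq,
        reduceCtorEq, and_true] at h
      · exact absurd h.1.symm (chi_not_box _ _)
      · rw [ihA _ h]

-- respects-connectives package
def Resp (v : Formula → Prop) : Prop :=
  (¬ v .bot) ∧ (∀ B C, v (.and B C) ↔ (v B ∧ v C)) ∧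
  (∀ B C, v (.or B C) ↔ (v B ∨ v C)) ∧ (∀ B C, v (.imp B C) ↔ (v B → v C))

-- soundness in the trivial one-world model, for consistency
lemma triv_sound {A : Formula} (h : NRProv A) :
    Sat (W := Unit) (fun _ _ _ => True) (fun _ _ => False) () A := by
  induction h with
  | taut ht =>
      exact ht (Sat (fun _ _ _ => True) (fun _ _ => False) ())
        (by simp [Sat]) (fun B C => Iff.rfl) (fun B C => Iff.rfl) (fun B C => Iff.rfl)
  | mp h1 h2 ih1 ih2 => exact ih1 ih2
  | nec h ih => intro y _; cases y; exact ih
  | ros h ih => intro hb; exact ih (hb () trivial)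

lemma consistency {B : Formula} (h1 : NRProv B) (h2 : NRProv B.neg) : False :=
  triv_sound (NRProv.mp h2 h1)

-- provable implies satisfied by all fully-constrained valuations
lemma prov_full {A : Formula} (h : NRProv A) :
    ∀ v : Formula → Prop, Resp v → (∀ B : Formula, NRProv B → v B.box) →
      (∀ B : Formula, NRProv B.neg → ¬ v B.box) → v A := by
  induction h with
  | taut ht => intro v hv _ _; exact ht v hv.1 hv.2.1 hv.2.2.1 hv.2.2.2
  | mp h1 h2 ih1 ih2 =>
      intro v hv hp hn
      exact (hv.2.2.2 _ _).1 (ih1 v hv hp hn) (ih2 v hv hp hn)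
  | nec h ih => intro v hv hp hn; exact hp _ h
  | ros h ih =>
      intro v hv hp hn
      rw [Formula.neg, hv.2.2.2]
      intro hb
      exact absurd hb (hn _ h)

noncomputable def extv (A : Formula) (v : Formula → Prop) : Formula → Prop
  | .var n => v (.var n)
  | .bot => False
  | .and B C => extv A v B ∧ extv A v C
  | .or B C => extv A v B ∨ extv A v C
  | .imp B C => extv A v B → extv A v C
  | .box B => if B.box ∈ subf A then v B.box else NRProv B

lemma extv_resp (A : Formula) (v : Formula → Prop) : Resp (extv A v) :=
  ⟨by simp [extv], fun B C => Iff.rfl, fun B C => Iff.rfl, fun B C => Iff.rfl⟩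

lemma extv_agree (A : Formula) (v : Formula → Prop) (hv : Resp v) :
    ∀ C, C ∈ subf A → (extv A v C ↔ v C) := by
  intro C
  induction C with
  | var n => intro _; simp [extv]
  | bot => intro _; exact ⟨False.elim, fun h => absurd h hv.1⟩
  | and B C ihB ihC =>
      intro h; rw [hv.2.1]
      exact and_congr (ihB (mem_and_left h)) (ihC (mem_and_right h))
  | or B C ihB ihC =>
      intro h; rw [hv.2.2.1]
      exact or_congr (ihB (mem_or_left h)) (ihC (mem_or_right h))
  | imp B C ihB ihC =>
      intro h; rw [hv.2.2.2]
      exact imp_congr (ihB (mem_imp_left h)) (ihC (mem_imp_right h))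
  | box B ih => intro h; simp only [extv, if_pos h]

def Tres (A : Formula) : Prop :=
  ∀ v : Formula → Prop, Resp v → (∀ B : Formula, B.box ∈ subf A → NRProv B → v B.box) →
    (∀ B : Formula, B.box ∈ subf A → NRProv B.neg → ¬ v B.box) → v A

lemma tres_of_prov {A : Formula} (h : NRProv A) : Tres A := by
  intro v hv hpos hneg
  have hp' : ∀ B : Formula, NRProv B → extv A v B.box := by
    intro B hB
    simp only [extv]
    split
    · exact hpos B (by assumption) hB
    · exact hB
  have hn' : ∀ B : Formula, NRProv B.neg → ¬ extv A v B.box := by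
    intro B hB
    simp only [extv]
    split
    · exact hneg B (by assumption) hB
    · exact fun hB' => consistency hB' hB
  have hfull := prov_full h (extv A v) (extv_resp A v) hp' hn'
  exact (extv_agree A v hv A (subf_self A)).1 hfull

noncomputable def hyps (A : Formula) : List Formula :=
  (subf A).toList.filterMap fun C =>
    match C with
    | .box B => if NRProv B then some B.box else if NRProv B.neg then some B.box.neg else none
    | _ => none

lemma hyps_prov {A : Formula} : ∀ H ∈ hyps A, NRProv H := by
  intro H hH
  simp only [hyps, List.mem_filterMap] at hH
  obtain ⟨C, _, hC⟩ := hH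
  cases C <;> simp_all
  split at hC
  · cases hC; exact NRProv.nec ‹_›
  · split at hC
    · cases hC; exact NRProv.ros ‹_›
    · cases hC

lemma pos_mem {A B : Formula} (h : B.box ∈ subf A) (hB : NRProv B) : B.box ∈ hyps A := by
  simp only [hyps, List.mem_filterMap]
  exact ⟨B.box, Finset.mem_toList.2 h, by simp [if_pos hB]⟩

lemma neg_mem {A B : Formula} (h : B.box ∈ subf A) (hB : NRProv B.neg) :
    B.box.neg ∈ hyps A := by
  simp only [hyps, List.mem_filterMap]
  refine ⟨B.box, Finset.mem_toList.2 h, ?_⟩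
  have : ¬ NRProv B := fun h' => consistency h' hB
  simp [if_neg this, if_pos hB]

lemma prov_foldr {A : Formula} : ∀ L : List Formula,
    NRProv (L.foldr .imp A) → (∀ H ∈ L, NRProv H) → NRProv A := by
  intro L
  induction L with
  | nil => intro h _; exact h
  | cons H L ih =>
      intro h hall
      exact ih (NRProv.mp h (hall H (by simp))) (fun H' hH' => hall H' (by simp [hH']))

lemma foldr_eval (v : Formula → Prop) (hv : Resp v) :
    ∀ (L : List Formula) (A : Formula), ((∀ H ∈ L, v H) → v A) → v (L.foldr .imp A) := by
  intro L
  induction L with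
  | nil => intro A h; exact h (by simp)
  | cons H L ih =>
      intro A h
      simp only [List.foldr_cons]
      rw [hv.2.2.2]
      intro hH
      exact ih A fun hall => h (by
        intro H' hH'
        simp at hH'
        rcases hH' with rfl | h' 
        · exact hH
        · exact hall H' h')

lemma prov_of_tres {A : Formula} (h : Tres A) : NRProv A := by
  apply prov_foldr (hyps A)
  · apply NRProv.taut
    intro v h1 h2 h3 h4
    have hv : Resp v := ⟨h1, h2, h3, h4⟩
    apply foldr_eval v hv
    intro hall
    apply h v hv
    · intro B hB hpB
      exact hall _ (pos_mem hB hpB)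
    · intro B hB hnB hvB
      have := hall _ (neg_mem hB hnB)
      rw [Formula.neg, hv.2.2.2] at this
      exact hv.1 (this hvB)
  · exact hyps_prov

lemma chi_taut {A : Formula} (h : IsTautology A) : IsTautology (chi A) := by
  intro v h1 h2 h3 h4
  exact h (fun C => v (chi C)) h1 (fun B C => h2 _ _) (fun B C => h3 _ _) (fun B C => h4 _ _)

lemma dni {A : Formula} (h : NRProv A) : NRProv A.neg.neg := by
  refine NRProv.mp (NRProv.taut ?_) h
  intro v h1 h2 h3 h4
  simp only [Formula.neg, h4]
  intro hA f
  exact f hA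

lemma dne {A : Formula} (h : NRProv A.neg.neg) : NRProv A := by
  refine NRProv.mp (NRProv.taut ?_) h
  intro v h1 h2 h3 h4
  simp only [Formula.neg, h4]
  intro hnn
  by_cases hA : v A
  · exact hA
  · exact absurd (hnn fun a => absurd a hA) h1

lemma chi_forward {A : Formula} (h : NRProv A) : NRProv (chi A) := by
  induction h with
  | taut ht => exact NRProv.taut (chi_taut ht)
  | mp _ _ ih1 ih2 => exact NRProv.mp ih1 ih2
  | nec _ ih => exact NRProv.ros (dni ih)
  | ros _ ih => exact dni (NRProv.nec ih)

lemma subf_chi : ∀ (A D : Formula), D.box ∈ subf (chi A) →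
    ∃ B, B.box ∈ subf A ∧ D = (chi B).neg := by
  intro A
  induction A with
  | var n => intro D h; simp [chi, subf] at h
  | bot => intro D h; simp [chi, subf] at h
  | and A B ihA ihB =>
      intro D h
      simp only [chi, subf, Finset.mem_insert, Finset.mem_union] at h
      rcases h with h | h | h
      · exact absurd h (by simp)
      · obtain ⟨B', hB', hD⟩ := ihA D h
        exact ⟨B', by simp [subf]; tauto, hD⟩
      · obtain ⟨B', hB', hD⟩ := ihB D h
        exact ⟨B', by simp [subf]; tauto, hD⟩
  | or A B ihA ihB =>
      intro D h
      simp only [chi, subf, Finset.mem_insert, Finset.mem_union] at h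
      rcases h with h | h | h
      · exact absurd h (by simp)
      · obtain ⟨B', hB', hD⟩ := ihA D h
        exact ⟨B', by simp [subf]; tauto, hD⟩
      · obtain ⟨B', hB', hD⟩ := ihB D h
        exact ⟨B', by simp [subf]; tauto, hD⟩
  | imp A B ihA ihB =>
      intro D h
      simp only [chi, subf, Finset.mem_insert, Finset.mem_union] at h
      rcases h with h | h | h
      · exact absurd h (by simp)
      · obtain ⟨B', hB', hD⟩ := ihA D h
        exact ⟨B', by simp [subf]; tauto, hD⟩
      · obtain ⟨B', hB', hD⟩ := ihB D h
        exact ⟨B', by simp [subf]; tauto, hD⟩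
  | box A ihA =>
      intro D h
      simp only [chi, Formula.neg, subf, Finset.mem_insert, Finset.mem_union,
        Finset.mem_singleton] at h
      rcases h with h | (h | h | h) | h
      · exact absurd h (by simp)
      · -- D.box = box ((chi A).imp bot)
        have : D = (chi A).neg := by
          simpa [Formula.neg] using h
        exact ⟨A, by simp [subf], this⟩
      · exact absurd h (by simp)
      · rcases h with h | h
        · obtain ⟨B', hB', hD⟩ := ihA D h
          exact ⟨B', by simp [subf]; tauto, hD⟩
        · exact absurd h (by simp)
      · exact absurd h (by simp)

def flipv (A : Formula) (v : Formula → Prop) : Formula → Prop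
  | .var n => v (.var n)
  | .bot => False
  | .and B C => flipv A v B ∧ flipv A v C
  | .or B C => flipv A v B ∨ flipv A v C
  | .imp B C => flipv A v B → flipv A v C
  | .box D => ∃ B, D = (chi B).neg ∧ B.box ∈ subf A ∧ ¬ v B.box

lemma flipv_resp (A : Formula) (v : Formula → Prop) : Resp (flipv A v) :=
  ⟨by simp [flipv], fun B C => Iff.rfl, fun B C => Iff.rfl, fun B C => Iff.rfl⟩

lemma flip_agree (A : Formula) (v : Formula → Prop) (hv : Resp v) :
    ∀ C, C ∈ subf A → (flipv A v (chi C) ↔ v C) := by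
  intro C
  induction C with
  | var n => intro _; simp [chi, flipv]
  | bot => intro _; exact ⟨False.elim, fun h => absurd h hv.1⟩
  | and B C ihB ihC =>
      intro h
      show (flipv A v (chi B) ∧ flipv A v (chi C)) ↔ v (.and B C)
      rw [hv.2.1]
      exact and_congr (ihB (mem_and_left h)) (ihC (mem_and_right h))
  | or B C ihB ihC =>
      intro h
      show (flipv A v (chi B) ∨ flipv A v (chi C)) ↔ v (.or B C)
      rw [hv.2.2.1]
      exact or_congr (ihB (mem_or_left h)) (ihC (mem_or_right h))
  | imp B C ihB ihC =>
      intro h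
      show (flipv A v (chi B) → flipv A v (chi C)) ↔ v (.imp B C)
      rw [hv.2.2.2]
      exact imp_congr (ihB (mem_imp_left h)) (ihC (mem_imp_right h))
  | box B ih =>
      intro h
      show (flipv A v (Formula.box ((chi B).neg)) → False) ↔ v B.box
      constructor
      · intro hcon
        by_contra hn
        exact hcon ⟨B, rfl, h, hn⟩
      · rintro hvB ⟨B', he, _, hnv⟩
        have hBB : B' = B := by
          simp only [Formula.neg, Formula.imp.injEq, and_true] at he
          exact chi_inj _ _ he.symm
        subst hBB
        exact hnv hvB

lemma chi_backward : ∀ n (A : Formula), boxes A < n → NRProv (chi A) → NRProv A := by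
  intro n
  induction n with
  | zero => intro A hA; omega
  | succ n ih =>
      intro A hA h
      apply prov_of_tres
      intro v hv hpos hneg
      have hlt : ∀ B : Formula, B.box ∈ subf A → boxes B < n := by
        intro B hB
        have := boxes_subf hB
        simp only [boxes] at this
        omega
      have hp' : ∀ D : Formula, D.box ∈ subf (chi A) → NRProv D → flipv A v D.box := by
        intro D hD hpD
        obtain ⟨B, hB, rfl⟩ := subf_chi A D hD
        have hBn : NRProv B.neg :=
          ih B.neg (by simp only [boxes, Formula.neg]; have := hlt B hB; omega) hpD
        exact ⟨B, rfl, hB, hneg B hB hBn⟩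
      have hn' : ∀ D : Formula, D.box ∈ subf (chi A) → NRProv D.neg → ¬ flipv A v D.box := by
        rintro D hD hnD ⟨B', he, hB', hnv⟩
        obtain ⟨B, hB, hDe⟩ := subf_chi A D hD
        subst hDe
        have hBB : B' = B := by
          simp only [Formula.neg, Formula.imp.injEq, and_true] at he
          exact chi_inj _ _ he.symm
        subst hBB
        have hnn : NRProv B'.neg.neg :=
          ih B'.neg.neg (by simp only [boxes, Formula.neg]; have := hlt B' hB'; omega) hnD
        exact hnv (hpos B' hB' (dne hnn))
      have hT := tres_of_prov h (flipv A v) (flipv_resp A v) hp' hn'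
      exact (flip_agree A v hv A (subf_self A)).1 hT

/-- Interchangeability of □ and ◇ in NR: `NR ⊢ A` iff `NR ⊢ χ(A)`. -/
theorem stmt15 (A : Formula) : NRProv A ↔ NRProv (chi A) :=
  ⟨chi_forward, fun h => chi_backward (boxes A + 1) A (by omega) h⟩
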